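/- For 0 ≤ k ≤ n, the coefficient ⟨n, k⟩_q of x^{n-k} in f(x)^{k+1} equals ∑_{λ ∈ P_{n+1,k+1}} w(λ), where for a partition λ = (λ_1, ..., λ_ℓ) the weight is w(λ) = (∏_{i=1}^{ℓ-1} C(λ_i, λ_{i+1})) · q^{∑_{i=1}^{ℓ} (i-1)λ_i}, and P_{n+1,k+1} is the set of partitions of n+1 with largest part k+1. -/

import Mathlib

noncomputable def f : PowerSeries (Polynomial ℤ) :=
  PowerSeries.mk fun m => (Polynomial.X : Polynomial ℤ) ^ Nat.choose (m + 1) 2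

noncomputable def angle (n k : ℕ) : Polynomial ℤ :=
  PowerSeries.coeff (R := Polynomial ℤ) (n - k) (f ^ (k + 1))

/-- The decreasing list of parts of a partition. -/
def plist {n : ℕ} (p : n.Partition) : List ℕ := p.parts.sort (· ≥ ·)

/-- `coef(λ) = ∏ C(λ_i, λ_{i+1})`. -/
def coefw (l : List ℕ) : ℕ :=
  ∏ i ∈ Finset.range (l.length - 1), (l.getD i 0).choose (l.getD (i + 1) 0)

/-- `ex(λ) = ∑ (i-1) λ_i`. -/
def exw (l : List ℕ) : ℕ := ∑ i ∈ Finset.range l.length, i * l.getD i 0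

/-- The weight `w(λ) = coef(λ) q^{ex(λ)}`. -/
noncomputable def w (l : List ℕ) : Polynomial ℤ :=
  (coefw l : Polynomial ℤ) * Polynomial.X ^ exw l

/-! The generating function satisfies `f(x) = 1 + q x f(q x)`, so the binomial theorem gives
`[x^r] f^K = ∑_i C(K, i) q^r [x^(r-i)] f^i`. On the partition side, removing the first part `K`
from a partition of `r + K` leaves a partition `λ'` of `r` with first part `i ≤ K`, and
`w(K, λ') = C(K, i) q^r w(λ')`. Both sides thus obey the same recurrence with the same initial
values, and agree by strong induction on `r`. -/

open Finset

section GeneratingFunction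

open PowerSeries

theorem f_eq_one_add_X_mul_rescale :
    f = 1 + C (Polynomial.X : Polynomial ℤ) * (X * rescale Polynomial.X f) := by
  refine PowerSeries.ext fun m => ?_
  rcases m with _ | m
  · simp [f, coeff_zero_eq_constantCoeff]
  · rw [map_add, coeff_one, if_neg m.succ_ne_zero, zero_add, coeff_C_mul, coeff_succ_X_mul,
      coeff_rescale, f, coeff_mk, coeff_mk, Nat.choose_succ_succ (m + 1) 1, Nat.choose_one_right]
    ring

theorem coeff_f_pow (r K : ℕ) :
    coeff r (f ^ K) = ∑ i ∈ range (K + 1),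
      if i ≤ r then (K.choose i : Polynomial ℤ) * Polynomial.X ^ r * coeff (r - i) (f ^ i)
      else 0 := by
  conv_lhs => rw [f_eq_one_add_X_mul_rescale, add_comm, add_pow, map_sum]
  refine sum_congr rfl fun i _ => ?_
  rw [one_pow, mul_one, mul_pow, mul_pow, ← map_pow, ← map_pow, ← map_natCast C, coeff_mul_C,
    coeff_C_mul, coeff_X_pow_mul']
  split_ifs with h
  · rw [coeff_rescale, ← mul_assoc, ← pow_add, Nat.add_sub_cancel' h]
    ring
  · simp

end GeneratingFunction

theorem List.head?_eq_some_iff_headD {α : Type*} {l : List α} {a d : α} (h : a ≠ d) :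
    l.head? = some a ↔ l.headD d = a := by
  cases l <;> simp [Ne.symm h]

theorem sum_range_getD (l : List ℕ) : ∑ i ∈ range l.length, l.getD i 0 = l.sum := by
  induction l with
  | nil => rfl
  | cons a l ih =>
    rw [List.length_cons, sum_range_succ', List.sum_cons, ← ih, add_comm]
    rfl

theorem coefw_cons (a : ℕ) (l : List ℕ) :
    coefw (a :: l) = a.choose (l.headD 0) * coefw l := by
  cases l with
  | nil => simp [coefw]
  | cons b l =>
    rw [coefw, coefw, List.length_cons, List.length_cons, Nat.add_sub_cancel,
      Nat.add_sub_cancel, prod_range_succ', mul_comm]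
    rfl

theorem exw_cons (a : ℕ) (l : List ℕ) : exw (a :: l) = l.sum + exw l := by
  rw [exw, exw, List.length_cons, sum_range_succ', ← sum_range_getD, ← sum_add_distrib]
  simp only [List.getD_cons_succ, add_mul, one_mul, zero_mul, add_zero]
  exact sum_congr rfl fun _ _ => add_comm _ _

theorem w_cons (a : ℕ) (l : List ℕ) :
    w (a :: l) = (a.choose (l.headD 0) : Polynomial ℤ) * Polynomial.X ^ l.sum * w l := by
  rw [w, w, coefw_cons, exw_cons, pow_add, Nat.cast_mul]
  ring

section PartitionList

variable {n : ℕ}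

theorem plist_sum (p : n.Partition) : (plist p).sum = n := by
  rw [← Multiset.sum_coe, plist, Multiset.sort_eq, p.parts_sum]

theorem mem_plist {p : n.Partition} {a : ℕ} : a ∈ plist p ↔ a ∈ p.parts :=
  Multiset.mem_sort _

theorem le_headD_plist {p : n.Partition} {a : ℕ} (ha : a ∈ p.parts) :
    a ≤ (plist p).headD 0 := by
  have hsorted : (plist p).Pairwise (· ≥ ·) := Multiset.pairwise_sort _ _
  rw [← mem_plist] at ha
  cases h : plist p with
  | nil => simp [h] at ha
  | cons b l =>
    rw [h] at ha hsorted
    rcases List.mem_cons.1 ha with rfl | ha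
    · exact le_rfl
    · exact List.rel_of_pairwise_cons hsorted ha

theorem headD_plist_mem (hn : n ≠ 0) (p : n.Partition) : (plist p).headD 0 ∈ p.parts := by
  cases h : plist p with
  | nil => exact absurd (h ▸ plist_sum p).symm hn
  | cons b l => exact mem_plist.1 (by simp [h])

theorem headD_plist_le (p : n.Partition) : (plist p).headD 0 ≤ n := by
  rcases eq_or_ne n 0 with rfl | hn
  · simp [plist]
  · exact Nat.Partition.le_of_mem_parts (headD_plist_mem hn p)

theorem headD_plist_le_iff {p : n.Partition} {a : ℕ} :
    (plist p).headD 0 ≤ a ↔ ∀ b ∈ p.parts, b ≤ a := by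
  refine ⟨fun h b hb => (le_headD_plist hb).trans h, fun h => ?_⟩
  rcases eq_or_ne n 0 with rfl | hn
  · simp [plist]
  · exact h _ (headD_plist_mem hn p)

theorem plist_partitionWithPartEquiv_symm {a : ℕ} (ha1 : 1 ≤ a) (ha : a ≤ n)
    {q : (n - a).Partition} (hq : (plist q).headD 0 ≤ a) :
    plist ((Nat.Partition.partitionWithPartEquiv ha1 ha).symm q).1 = a :: plist q := by
  rw [plist, Nat.Partition.partitionWithPartEquiv_symm_apply_parts]
  exact Multiset.sort_cons _ _ _ (headD_plist_le_iff.1 hq)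

end PartitionList

/-- Reading the first part of the empty partition as `0` makes `weightSum m 0 = [m = 0]`, the
coefficient of `x^m` in `f^0`. -/
noncomputable def weightSum (m j : ℕ) : Polynomial ℤ :=
  ∑ p ∈ univ.filter (fun p : m.Partition => (plist p).headD 0 = j), w (plist p)

theorem weightSum_zero_right (m : ℕ) : weightSum m 0 = if m = 0 then 1 else 0 := by
  rcases eq_or_ne m 0 with rfl | hm
  · simp [weightSum, plist, w, coefw, exw]
  · rw [if_neg hm]
    refine sum_eq_zero fun p hp => absurd (mem_filter.1 hp).2 ?_
    exact (p.parts_pos (headD_plist_mem hm p)).ne'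

theorem weightSum_eq_zero_of_lt {m j : ℕ} (h : m < j) : weightSum m j = 0 :=
  sum_eq_zero fun p hp => absurd ((mem_filter.1 hp).2 ▸ headD_plist_le p) h.not_ge

open Nat.Partition in
theorem weightSum_eq_sum_cons {m K : ℕ} (hK : 1 ≤ K) (hKm : K ≤ m) :
    weightSum m K =
      ∑ q ∈ univ.filter (fun q : (m - K).Partition => (plist q).headD 0 ≤ K),
        w (K :: plist q) := by
  have hmem {p : m.Partition} (hp : p ∈ univ.filter fun p => (plist p).headD 0 = K) :
      K ∈ p.parts :=
    (mem_filter.1 hp).2 ▸ headD_plist_mem (by omega) p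
  symm
  refine sum_bij' (fun q _ => ((partitionWithPartEquiv hK hKm).symm q).1)
    (fun p hp => partitionWithPartEquiv hK hKm ⟨p, hmem hp⟩) (fun q hq => ?_) (fun p hp => ?_)
    (fun _ _ => by simp) (fun _ _ => by simp) (fun q hq => ?_)
  · simp only [mem_filter, mem_univ, true_and]
    rw [plist_partitionWithPartEquiv_symm hK hKm (mem_filter.1 hq).2, List.headD_cons]
  · simp only [mem_filter, mem_univ, true_and, headD_plist_le_iff,
      partitionWithPartEquiv_apply_parts]
    exact fun b hb => (mem_filter.1 hp).2 ▸ le_headD_plist (Multiset.mem_of_mem_erase hb)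
  · rw [plist_partitionWithPartEquiv_symm hK hKm (mem_filter.1 hq).2]

theorem weightSum_eq_sum {m K : ℕ} (hK : 1 ≤ K) (hKm : K ≤ m) :
    weightSum m K = ∑ i ∈ range (K + 1),
      (K.choose i : Polynomial ℤ) * Polynomial.X ^ (m - K) * weightSum (m - K) i := by
  rw [weightSum_eq_sum_cons hK hKm, ← sum_fiberwise_of_maps_to (g := fun q => (plist q).headD 0)
    (t := range (K + 1)) fun q hq => mem_range_succ_iff.2 (mem_filter.1 hq).2]
  refine sum_congr rfl fun i hi => ?_
  rw [weightSum, mul_sum, filter_filter]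
  refine sum_congr
    (filter_congr fun q _ => ⟨And.right, fun h => ⟨h ▸ mem_range_succ_iff.1 hi, h⟩⟩)
    fun q hq => ?_
  rw [w_cons, plist_sum, (mem_filter.1 hq).2]

theorem coeff_f_pow_zero (r : ℕ) : PowerSeries.coeff r (f ^ 0) = weightSum r 0 := by
  rw [pow_zero, PowerSeries.coeff_one, weightSum_zero_right]

theorem coeff_f_pow_eq_weightSum (r K : ℕ) :
    PowerSeries.coeff r (f ^ K) = weightSum (r + K) K := by
  induction r using Nat.strong_induction_on generalizing K with
  | _ r ih =>
    rcases Nat.eq_zero_or_pos K with rfl | hK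
    · exact coeff_f_pow_zero r
    rw [coeff_f_pow, weightSum_eq_sum hK (Nat.le_add_left K r), Nat.add_sub_cancel]
    refine sum_congr rfl fun i _ => ?_
    split_ifs with hir
    · rcases Nat.eq_zero_or_pos i with rfl | hi
      · rw [Nat.sub_zero, coeff_f_pow_zero]
      · rw [ih (r - i) (by omega) i, Nat.sub_add_cancel hir]
    · rw [weightSum_eq_zero_of_lt (not_le.1 hir), mul_zero]

theorem angle_eq_sum_weights (n k : ℕ) (hkn : k ≤ n) :
    angle n k =
      ∑ p ∈ Finset.univ.filter
        (fun p : (n + 1).Partition => (plist p).head? = some (k + 1)),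
        w (plist p) := by
  rw [angle, coeff_f_pow_eq_weightSum, show n - k + (k + 1) = n + 1 by omega, weightSum]
  exact sum_congr (filter_congr fun p _ => (List.head?_eq_some_iff_headD k.succ_ne_zero).symm)
    fun _ _ => rfl
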